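/- arXiv:1103.1031 — 5 statements merged into one kernel-verified Lean document; each statement's English description precedes it below -/
import Mathlib

section
/- Let W = GF(q^k) viewed as a vector space over GF(q), and let U be a GF(q)-subspace of W. For each α ∈ GF(q^k), define U_α = {(αu, u) : u ∈ U} ⊆ W × U. Then the collection {U_α : α ∈ GF(q^k)} ∪ {W × {0}} is a vector space partition of V = W × U, consisting of q^k subspaces of dimension dim(U) and one subspace of dimension k. -/
/-- A vector space partition: a collection of nonzero subspaces such that every
nonzero vector lies in exactly one member. -/
def IsVSPartition {F V : Type*} [Field F] [AddCommGroup V] [Module F V]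
    (P : Set (Submodule F V)) : Prop :=
  ⊥ ∉ P ∧ ∀ v : V, v ≠ 0 → ∃! U, U ∈ P ∧ v ∈ U

/-- The Bu–Beutelspacher construction: for W = GF(q^k) and a subspace U ≤ W, the
subspaces U_α = {(αu, u) : u ∈ U} for α ∈ GF(q^k), together with W × {0}, form a
vector space partition of W × U consisting of q^k subspaces of dimension dim U and
one subspace of dimension k. -/
theorem bu_construction (q k : ℕ) (hq : 1 < q) (hk : 0 < k)
    (F : Type*) [Field F] [Fintype F] (hF : Fintype.card F = q)
    (K : Type*) [Field K] [Fintype K] [Algebra F K]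
    (hK : Fintype.card K = q ^ k) (hrank : Module.finrank F K = k)
    (U : Submodule F K) (hU : U ≠ ⊥)
    (Ua : K → Submodule F (K × ↥U))
    (hUa : ∀ α : K, Ua α =
      LinearMap.range (((LinearMap.mulLeft F α).comp U.subtype).prod LinearMap.id))
    (W₀ : Submodule F (K × ↥U)) (hW₀ : W₀ = LinearMap.range (LinearMap.inl F K ↥U)) :
    IsVSPartition (Set.range Ua ∪ {W₀}) ∧
      Function.Injective Ua ∧
      (∀ α : K, Module.finrank F ↥(Ua α) = Module.finrank F ↥U) ∧
      Module.finrank F ↥W₀ = k ∧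
      W₀ ∉ Set.range Ua := by
  -- membership characterizations
  have mem_Ua : ∀ (α : K) (v : K × ↥U), v ∈ Ua α ↔ ∃ u : ↥U, (α * (u : K), u) = v := by
    intro α v
    rw [hUa]
    simp [LinearMap.mem_range, LinearMap.prod_apply, Prod.ext_iff]
  have mem_W₀ : ∀ v : K × ↥U, v ∈ W₀ ↔ v.2 = 0 := by
    intro v
    rw [hW₀]
    constructor
    · rintro ⟨y, rfl⟩; rfl
    · intro h
      exact ⟨v.1, by ext <;> simp [h]⟩
  -- a nonzero element of U
  obtain ⟨u₀, hu₀U, hu₀⟩ := Submodule.exists_mem_ne_zero_of_ne_bot hU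
  have hu₀' : (⟨u₀, hu₀U⟩ : ↥U) ≠ 0 := fun h => hu₀ (by simpa using congrArg Subtype.val h)
  -- injectivity of Ua
  have hinj : Function.Injective Ua := by
    intro α β h
    have hmem : ((α * u₀, ⟨u₀, hu₀U⟩) : K × ↥U) ∈ Ua β := by
      rw [← h, mem_Ua]; exact ⟨⟨u₀, hu₀U⟩, rfl⟩
    rw [mem_Ua] at hmem
    obtain ⟨u, hu⟩ := hmem
    have h2 : u = ⟨u₀, hu₀U⟩ := congrArg Prod.snd hu
    have h1 : β * u₀ = α * u₀ := by
      have := congrArg Prod.fst hu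
      simpa [h2] using this
    exact mul_right_cancel₀ hu₀ h1.symm
  -- W₀ is not one of the Ua
  have hW₀notin : W₀ ∉ Set.range Ua := by
    rintro ⟨α, hα⟩
    have : ((1, 0) : K × ↥U) ∈ Ua α := by rw [hα, mem_W₀]
    rw [mem_Ua] at this
    obtain ⟨u, hu⟩ := this
    have h2 : u = 0 := congrArg Prod.snd hu
    have h1 : α * (u : K) = 1 := congrArg Prod.fst hu
    rw [h2] at h1
    simp at h1
  refine ⟨⟨?_, ?_⟩, hinj, ?_, ?_, hW₀notin⟩
  · -- ⊥ not in the collection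
    rintro (⟨α, hα⟩ | hα)
    · have : ((α * u₀, ⟨u₀, hu₀U⟩) : K × ↥U) ∈ Ua α := by
        rw [mem_Ua]; exact ⟨⟨u₀, hu₀U⟩, rfl⟩
      rw [hα] at this
      rw [Submodule.mem_bot] at this
      exact hu₀' (Prod.ext_iff.mp this).2
    · have h0 : W₀ = ⊥ := (Set.mem_singleton_iff.mp hα).symm
      have : ((1, 0) : K × ↥U) ∈ W₀ := by rw [mem_W₀]
      rw [h0, Submodule.mem_bot] at this
      exact one_ne_zero ((Prod.ext_iff.mp this).1)
  · -- unique membership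
    intro v hv
    by_cases h2 : v.2 = 0
    · refine ⟨W₀, ⟨Or.inr rfl, (mem_W₀ v).mpr h2⟩, ?_⟩
      rintro T ⟨(⟨α, rfl⟩ | hT), hvT⟩
      · rw [mem_Ua] at hvT
        obtain ⟨u, hu⟩ := hvT
        have hu2 : u = v.2 := congrArg Prod.snd hu
        have hu1 : α * (u : K) = v.1 := congrArg Prod.fst hu
        rw [hu2, h2] at hu1
        simp at hu1
        have h1 : v.1 ≠ 0 := by
          intro h1; apply hv; ext
          · exact h1
          · simpa using congrArg Subtype.val h2
        exact absurd hu1.symm h1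
      · exact Set.mem_singleton_iff.mp hT
    · have hv2 : (v.2 : K) ≠ 0 := fun h => h2 (Subtype.ext h)
      set α := v.1 * (v.2 : K)⁻¹ with hα
      refine ⟨Ua α, ⟨Or.inl ⟨α, rfl⟩, ?_⟩, ?_⟩
      · rw [mem_Ua]
        exact ⟨v.2, by ext <;> simp [hα, mul_assoc, inv_mul_cancel₀ hv2]⟩
      · rintro T ⟨(⟨β, rfl⟩ | hT), hvT⟩
        · rw [mem_Ua] at hvT
          obtain ⟨u, hu⟩ := hvT
          have hu2 : u = v.2 := congrArg Prod.snd hu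
          have hu1 : β * (v.2 : K) = v.1 := by
            have := congrArg Prod.fst hu; rwa [hu2] at this
          have : β = α := by
            rw [hα, ← hu1, mul_assoc, mul_inv_cancel₀ hv2, mul_one]
          rw [this]
        · rw [Set.mem_singleton_iff.mp hT, mem_W₀] at hvT
          exact absurd hvT h2
  · -- dimensions of Ua α
    intro α
    rw [hUa]
    have hinjmap : Function.Injective
        (((LinearMap.mulLeft F α).comp U.subtype).prod (LinearMap.id (M := ↥U))) := by
      intro a b hab
      have := congrArg Prod.snd hab
      simpa using this
    exact LinearMap.finrank_range_of_inj hinjmap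
  · -- dimension of W₀
    rw [hW₀]
    rw [LinearMap.finrank_range_of_inj LinearMap.inl_injective]
    exact hrank
end

section
/- Let P = {U_1, ..., U_t} be a vector space partition of V = V(n,q). Define φ: U_1 × U_2 × ... × U_t → V by φ(u_1,...,u_t) = u_1 + u_2 + ... + u_t. Then φ is a surjective linear map, and its kernel C = {(u_1,...,u_t) : u_1 + ... + u_t = 0} is a perfect 1-error correcting code: every element x of U_1 × ... × U_t differs in at most one coordinate from a unique element of C. -/
/-- Herzog–Schönheim: the kernel of the summation map from the direct product of the
members of a vector space partition is a perfect 1-error correcting code. -/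
theorem perfect_code_from_partition
    (F V : Type*) [Field F] [Fintype F] [AddCommGroup V] [Module F V] [DecidableEq V]
    (t : ℕ) (U : Fin t → Submodule F V)
    (hbot : ∀ i, U i ≠ ⊥)
    (hcov : ∀ v : V, v ≠ 0 → ∃! i, v ∈ U i)
    (φ : (∀ i, U i) →ₗ[F] V)
    (hφ : φ = ∑ i, (U i).subtype.comp (LinearMap.proj i)) :
    Function.Surjective φ ∧
      ∀ x : ∀ i, U i, ∃! c : ∀ i, U i, c ∈ LinearMap.ker φ ∧ hammingDist x c ≤ 1 := by
  have hφ' : ∀ x : ∀ i, U i, φ x = ∑ i, (x i : V) := by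
    intro x
    rw [hφ]
    simp [LinearMap.sum_apply]
  -- difference lemma: if x and c agree off j, then ∑ x - ∑ c = x j - c j
  have hdiff : ∀ (x c : ∀ i, U i) (j : Fin t), (∀ k, k ≠ j → x k = c k) →
      (∑ i, (x i : V)) - (∑ i, (c i : V)) = (x j : V) - (c j : V) := by
    intro x c j h
    rw [← Finset.sum_sub_distrib]
    refine Finset.sum_eq_single j ?_ (by simp)
    intro k _ hk
    rw [h k hk, sub_self]
  -- characterize hammingDist ≤ 1
  have hham : ∀ (x c : ∀ i, U i), hammingDist x c ≤ 1 ↔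
      ∀ k l, x k ≠ c k → x l ≠ c l → k = l := by
    intro x c
    rw [hammingDist, Finset.card_le_one]
    constructor
    · intro h k l hk hl
      exact h k (by simpa using hk) l (by simpa using hl)
    · intro h k hk l hl
      exact h k l (by simpa using hk) (by simpa using hl)
  constructor
  · intro v
    by_cases hv : v = 0
    · exact ⟨0, by simp [hφ', hv]⟩
    · obtain ⟨i, hi, -⟩ := hcov v hv
      refine ⟨Pi.single i ⟨v, hi⟩, ?_⟩
      rw [hφ']
      rw [Finset.sum_eq_single i]
      · simp
      · intro k _ hk
        rw [Pi.single_eq_of_ne hk]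
        simp
      · simp
  · intro x
    set s : V := ∑ i, (x i : V) with hs
    by_cases hs0 : s = 0
    · refine ⟨x, ⟨by simp [LinearMap.mem_ker, hφ', ← hs, hs0], by simp⟩, ?_⟩
      rintro c ⟨hc, hcd⟩
      rw [LinearMap.mem_ker, hφ'] at hc
      by_contra hne
      obtain ⟨j, hj⟩ : ∃ j, x j ≠ c j := by
        by_contra h'
        push_neg at h'
        exact hne (funext fun k => (h' k).symm)
      have hagree : ∀ k, k ≠ j → x k = c k := by
        intro k hk
        by_contra hk'
        exact hk ((hham x c).mp hcd k j hk' hj)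
      have := hdiff x c j hagree
      rw [← hs, hs0, hc, sub_self] at this
      exact hj (Subtype.ext (sub_eq_zero.mp this.symm))
    · obtain ⟨j, hj, hjuniq⟩ := hcov s hs0
      refine ⟨Function.update x j (x j - ⟨s, hj⟩), ⟨?_, ?_⟩, ?_⟩
      · rw [LinearMap.mem_ker, hφ']
        have := hdiff x (Function.update x j (x j - ⟨s, hj⟩)) j
          (fun k hk => (Function.update_of_ne hk _ _).symm)
        rw [Function.update_self] at this
        simp only [Submodule.coe_sub] at this
        have h2 : (∑ i, (x i : V)) - (∑ i, ((Function.update x j (x j - ⟨s, hj⟩) i : V))) = s := by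
          rw [this]; abel
        rw [← hs] at h2
        exact sub_eq_self.mp h2
      · rw [hham]
        intro k l hk hl
        have hk' : k = j := by
          by_contra h
          exact hk (Function.update_of_ne h _ _).symm
        have hl' : l = j := by
          by_contra h
          exact hl (Function.update_of_ne h _ _).symm
        rw [hk', hl']
      · rintro c ⟨hc, hcd⟩
        rw [LinearMap.mem_ker, hφ'] at hc
        have hne : x ≠ c := by
          intro h
          rw [← h, ← hs] at hc
          exact hs0 hc
        obtain ⟨j', hj'⟩ : ∃ j', x j' ≠ c j' := by
          by_contra h'
          push_neg at h'
          exact hne (funext h')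
        have hagree : ∀ k, k ≠ j' → x k = c k := by
          intro k hk
          by_contra hk'
          exact hk ((hham x c).mp hcd k j' hk' hj')
        have hd := hdiff x c j' hagree
        rw [← hs, hc, sub_zero] at hd
        have hsU : s ∈ U j' := by
          rw [hd]
          exact sub_mem (x j').2 (c j').2
        have hjj : j' = j := hjuniq j' hsU
        subst hjj
        funext k
        by_cases hk : k = j'
        · subst hk
          rw [Function.update_self]
          apply Subtype.ext
          simp only [Submodule.coe_sub]
          rw [hd]
          abel
        · rw [Function.update_of_ne hk]
          exact (hagree k hk).symm
end

section
/- Let P be a vector space partition of V(n,q) with m_d members of dimension d for each d, and let H be a hyperplane containing exactly b_d members of P of dimension d, for each d ≥ 1. Then Σ_{d≥1} b_d · q^d = (Σ_{d≥1} m_d) - 1. -/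
open Finset Module

lemma vsp_count {F V : Type*} [Field F] [Fintype F] [AddCommGroup V] [Module F V]
    [Fintype V] [DecidableEq V]
    (P : Finset (Submodule F V))
    (hP : (⊥ : Submodule F V) ∉ P ∧ ∀ v : V, v ≠ 0 → ∃! U, U ∈ P ∧ v ∈ U)
    (W : Submodule F V) [DecidablePred (· ∈ W)]
    [∀ U : Submodule F V, DecidablePred (· ∈ U)] :
    ∑ U ∈ P, Fintype.card ↥(U ⊓ W) = (Fintype.card ↥W - 1) + P.card := by
  classical
  set t : Submodule F V → Finset V := fun U => Set.toFinset ((U ⊓ W : Submodule F V) : Set V) \ {0} with ht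
  have hcov : Set.toFinset (W : Set V) \ {0} = P.biUnion t := by
    ext v
    simp only [Finset.mem_biUnion, Finset.mem_sdiff, Set.mem_toFinset, SetLike.mem_coe,
      Finset.mem_singleton, ht, Submodule.mem_inf]
    constructor
    · rintro ⟨hvW, hv0⟩
      obtain ⟨U, ⟨hUP, hvU⟩, -⟩ := hP.2 v hv0
      exact ⟨U, hUP, ⟨hvU, hvW⟩, hv0⟩
    · rintro ⟨U, -, ⟨-, hvW⟩, hv0⟩
      exact ⟨hvW, hv0⟩
  have hdisj : ∀ U ∈ P, ∀ U' ∈ P, U ≠ U' → Disjoint (t U) (t U') := by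
    intro U hU U' hU' hne
    rw [Finset.disjoint_left]
    intro v hv hv'
    simp only [ht, Finset.mem_sdiff, Set.mem_toFinset, SetLike.mem_coe, Finset.mem_singleton,
      Submodule.mem_inf] at hv hv'
    obtain ⟨X, -, huniq⟩ := hP.2 v hv.2
    exact hne ((huniq U ⟨hU, hv.1.1⟩).trans (huniq U' ⟨hU', hv'.1.1⟩).symm)
  have hcard := congrArg Finset.card hcov
  rw [Finset.card_biUnion hdisj] at hcard
  have hzero : ∀ (S : Submodule F V) [DecidablePred (· ∈ S)],
      (Set.toFinset (S : Set V) \ {0}).card = Fintype.card ↥S - 1 := by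
    intro S _
    rw [Finset.card_sdiff_of_subset (by simp [Submodule.zero_mem]), Set.toFinset_card]
    simp [Set.toFinset_card]
  rw [hzero W] at hcard
  have h1 : ∀ U : Submodule F V, 1 ≤ Fintype.card ↥(U ⊓ W) :=
    fun U => Fintype.card_pos
  have : ∑ U ∈ P, Fintype.card ↥(U ⊓ W) = ∑ U ∈ P, ((t U).card + 1) := by
    apply Finset.sum_congr rfl
    intro U hU
    have := hzero (U ⊓ W)
    have := h1 U
    simp only [ht]
    omega
  rw [this, Finset.sum_add_distrib, Finset.sum_const, smul_eq_mul, mul_one, hcard]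

set_option maxHeartbeats 1000000 in
/-- The second packing condition of Heden and Lehmann: if a hyperplane H contains
exactly b_d members of dimension d of a partition with m_d members of dimension d,
then Σ b_d q^d = (Σ m_d) - 1. -/
theorem second_packing_condition (q n : ℕ) (hq : 1 < q) (hn : 0 < n)
    (F : Type*) [Field F] [Fintype F] (hF : Fintype.card F = q)
    (P : Finset (Submodule F (Fin n → F)))
    (hP : IsVSPartition (P : Set (Submodule F (Fin n → F))))
    (H : Submodule F (Fin n → F)) (hH : Module.finrank F H = n - 1)
    (m b : ℕ → ℕ)
    (hm : ∀ d, m d = {U ∈ (P : Set (Submodule F (Fin n → F))) |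
      Module.finrank F U = d}.ncard)
    (hb : ∀ d, b d = {U ∈ (P : Set (Submodule F (Fin n → F))) |
      Module.finrank F U = d ∧ U ≤ H}.ncard) :
    ∑ d ∈ Finset.Icc 1 n, b d * q ^ d = (∑ d ∈ Finset.Icc 1 n, m d) - 1 := by
  classical
  obtain ⟨hP1, hP2⟩ := hP
  have hVdim : finrank F (Fin n → F) = n := Module.finrank_fin_fun F
  have hcardU : ∀ U : Submodule F (Fin n → F), Fintype.card ↥U = q ^ finrank F ↥U := by
    intro U
    rw [card_eq_pow_finrank (K := F), hF]
  have hD1 : ∀ U ∈ P, 1 ≤ finrank F ↥U := by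
    intro U hU
    have hne : U ≠ ⊥ := fun h => hP1 (by simpa [h] using hU)
    have : Nontrivial ↥U := Submodule.nontrivial_iff_ne_bot.mpr hne
    exact Module.finrank_pos
  have hDn : ∀ U : Submodule F (Fin n → F), finrank F ↥U ≤ n := by
    intro U
    have := Submodule.finrank_le U
    omega
  have hPset : ((⊥ : Submodule F (Fin n → F)) ∉ P ∧
      ∀ v : Fin n → F, v ≠ 0 → ∃! U, U ∈ P ∧ v ∈ U) := by
    refine ⟨fun h => hP1 (by simpa using h), fun v hv => by simpa using hP2 v hv⟩
  have eqTop := vsp_count P hPset ⊤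
  have eqH := vsp_count P hPset H
  have hcardTop : Fintype.card ↥(⊤ : Submodule F (Fin n → F)) = q ^ n := by
    rw [hcardU, finrank_top, hVdim]
  have hcardH : Fintype.card ↥H = q ^ (n - 1) := by rw [hcardU, hH]
  have eq1 : ∑ U ∈ P, q ^ finrank F ↥U = (q ^ n - 1) + P.card := by
    rw [← hcardTop, ← eqTop]
    exact Finset.sum_congr rfl fun U _ => by rw [inf_top_eq, hcardU]
  have eq2 : ∑ U ∈ P, q ^ finrank F ↥(U ⊓ H) = (q ^ (n - 1) - 1) + P.card := by
    rw [← hcardH, ← eqH]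
    exact Finset.sum_congr rfl fun U _ => by rw [hcardU]
  have heH : ∀ U : Submodule F (Fin n → F), U ≤ H →
      finrank F ↥(U ⊓ H) = finrank F ↥U := by
    intro U hUH
    rw [show U ⊓ H = U from inf_eq_left.mpr hUH]
  have heNH : ∀ U ∈ P, ¬ U ≤ H → finrank F ↥(U ⊓ H) = finrank F ↥U - 1 := by
    intro U hU hUH
    have hlt : H < U ⊔ H := lt_of_le_of_ne le_sup_right
      (fun h => hUH (h ▸ le_sup_left))
    have h2 : n - 1 < finrank F ↥(U ⊔ H) := hH ▸ Submodule.finrank_lt_finrank_of_lt hlt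
    have h3 : finrank F ↥(U ⊔ H) ≤ n := by
      have := Submodule.finrank_le (U ⊔ H)
      omega
    have h5 := Submodule.finrank_sup_add_finrank_inf_eq U H
    rw [hH] at h5
    have := hD1 U hU
    omega
  -- split the sums
  set PH := P.filter (fun U => U ≤ H) with hPHdef
  set A := ∑ U ∈ PH, q ^ finrank F ↥U with hA
  set C := ∑ U ∈ P.filter (fun U => ¬ U ≤ H), q ^ (finrank F ↥U - 1) with hC
  set M := P.card with hM
  have hsplit1 : A + q * C = (q ^ n - 1) + M := by
    rw [← eq1, ← Finset.sum_filter_add_sum_filter_not P (fun U => U ≤ H)]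
    congr 1
    rw [Finset.mul_sum]
    refine Finset.sum_congr rfl fun U hU => ?_
    have h1 := hD1 U (Finset.mem_filter.mp hU).1
    rw [← pow_succ']
    congr 1
    omega
  have hsplit2 : A + C = (q ^ (n - 1) - 1) + M := by
    rw [← eq2, ← Finset.sum_filter_add_sum_filter_not P (fun U => U ≤ H)]
    congr 1
    · exact Finset.sum_congr rfl fun U hU => by
        rw [heH U (Finset.mem_filter.mp hU).2]
    · exact Finset.sum_congr rfl fun U hU => by
        rw [heNH U (Finset.mem_filter.mp hU).1 (Finset.mem_filter.mp hU).2]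
  have hM1 : 1 ≤ M := by
    have hv : (fun _ => (1 : F) : Fin n → F) ≠ 0 := by
      intro h
      have := congrFun h ⟨0, hn⟩
      simp at this
    obtain ⟨U, ⟨hU, -⟩, -⟩ := hP2 _ hv
    exact Finset.card_pos.mpr ⟨U, by simpa using hU⟩
  -- integer algebra
  have hqn1 : 1 ≤ q ^ n := Nat.one_le_pow _ _ (by omega)
  have hqn1' : 1 ≤ q ^ (n - 1) := Nat.one_le_pow _ _ (by omega)
  have z1 : (A : ℤ) + q * C = q ^ n - 1 + M := by
    have := congrArg (Nat.cast : ℕ → ℤ) hsplit1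
    push_cast [Nat.cast_sub hqn1] at this ⊢
    linarith
  have z2 : (A : ℤ) + C = q ^ (n - 1) - 1 + M := by
    have := congrArg (Nat.cast : ℕ → ℤ) hsplit2
    push_cast [Nat.cast_sub hqn1'] at this ⊢
    linarith
  have hqpow : (q : ℤ) ^ n = q * q ^ (n - 1) := by
    rw [← pow_succ']
    congr 1
    omega
  have hkey : ((q : ℤ) - 1) * ((A : ℤ) - ((M : ℤ) - 1)) = 0 := by
    linear_combination (q : ℤ) * z2 - z1 - hqpow
  have hAM : (A : ℤ) = (M : ℤ) - 1 := by
    rcases mul_eq_zero.mp hkey with h | h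
    · exfalso
      have : (1 : ℤ) < q := by exact_mod_cast hq
      omega
    · linarith
  have hAM' : A = M - 1 := by omega
  -- reindex the sums
  have hbsum : ∑ d ∈ Finset.Icc 1 n, b d * q ^ d = A := by
    have hb' : ∀ d, b d = (PH.filter (fun U : Submodule F (Fin n → F) => finrank F U = d)).card := by
      intro d
      rw [hb, ← Set.ncard_coe_finset]
      congr 1
      ext U
      simp only [Finset.coe_filter, hPHdef, Finset.mem_filter, Set.mem_setOf_eq,
        Finset.mem_coe]
      tauto
    calc ∑ d ∈ Finset.Icc 1 n, b d * q ^ d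
        = ∑ d ∈ Finset.Icc 1 n, ∑ U ∈ PH.filter (fun U : Submodule F (Fin n → F) => finrank F U = d), q ^ finrank F ↥U := by
          refine Finset.sum_congr rfl fun d _ => ?_
          rw [hb', Finset.sum_congr rfl (fun U hU => by
            rw [(Finset.mem_filter.mp hU).2]), Finset.sum_const, smul_eq_mul]
      _ = A := by
          rw [hA]
          apply Finset.sum_fiberwise_of_maps_to
          intro U hU
          have hUP := (Finset.mem_filter.mp hU).1
          exact Finset.mem_Icc.mpr ⟨hD1 U hUP, hDn U⟩
  have hmsum : ∑ d ∈ Finset.Icc 1 n, m d = M := by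
    have hm' : ∀ d, m d = (P.filter (fun U : Submodule F (Fin n → F) => finrank F U = d)).card := by
      intro d
      rw [hm, ← Set.ncard_coe_finset]
      congr 1
      ext U
      simp only [Finset.coe_filter, Set.mem_setOf_eq, Finset.mem_coe]
    calc ∑ d ∈ Finset.Icc 1 n, m d
        = ∑ d ∈ Finset.Icc 1 n, ∑ U ∈ P.filter (fun U : Submodule F (Fin n → F) => finrank F U = d), 1 := by
          simp [hm']
      _ = ∑ U ∈ P, 1 := by
          apply Finset.sum_fiberwise_of_maps_to
          intro U hU
          exact Finset.mem_Icc.mpr ⟨hD1 U hU, hDn U⟩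
      _ = M := by simp [hM]
  rw [hbsum, hmsum, hAM']
end

section
/- If a finite abelian group G admits a nontrivial partition into proper subgroups (a collection of subgroups, pairwise intersecting only in the identity, whose union is G, with at least two members), then there exists a prime p such that every nonidentity element of G has order p (i.e., G is an elementary abelian p-group). -/
/-- Miller's 1906 theorem: if a finite abelian group admits a nontrivial partition into
proper subgroups, then it is an elementary abelian p-group. -/
theorem miller_partition (G : Type*) [CommGroup G] [Fintype G]
    (P : Set (Subgroup G))
    (hbot : ∀ H ∈ P, H ≠ ⊥)
    (hproper : ∀ H ∈ P, H ≠ ⊤)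
    (hcov : ∀ g : G, g ≠ 1 → ∃! H, H ∈ P ∧ g ∈ H)
    (hcard : 2 ≤ P.ncard) :
    ∃ p : ℕ, p.Prime ∧ ∀ g : G, g ≠ 1 → orderOf g = p := by
  -- distinct members intersect trivially
  have hdis : ∀ x : G, x ≠ 1 → ∀ H ∈ P, x ∈ H → ∀ K ∈ P, x ∈ K → H = K := by
    intro x hx H hH hxH K hK hxK
    obtain ⟨U, _, hU⟩ := hcov x hx
    rw [hU H ⟨hH, hxH⟩, hU K ⟨hK, hxK⟩]
  -- key step: an element of prime order p and a nonidentity element in a different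
  -- member force the latter to have order p as well
  have key : ∀ p : ℕ, p.Prime → ∀ a b : G, a ≠ 1 → b ≠ 1 →
      ∀ Ha ∈ P, a ∈ Ha → ∀ Hb ∈ P, b ∈ Hb → Ha ≠ Hb → orderOf a = p → orderOf b = p := by
    intro p hp a b ha hb Ha hHa haH Hb hHb hbH hne hao
    have hbp : b ^ p = 1 := by
      by_contra hbp
      have hc : a * b ≠ 1 := by
        intro h
        have hb' : b = a⁻¹ := by rw [eq_inv_iff_mul_eq_one, mul_comm]; exact h
        exact hne (hdis b hb Ha hHa (hb' ▸ Ha.inv_mem haH) Hb hHb hbH)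
      obtain ⟨Hc, ⟨hHc, hcH⟩, _⟩ := hcov (a * b) hc
      have hcB : Hc ≠ Hb := by
        intro h
        have : a ∈ Hc := by
          have := Hc.mul_mem hcH (Hc.inv_mem (h ▸ hbH))
          simpa [mul_assoc] using this
        exact hne ((hdis a ha Ha hHa haH Hc hHc this).trans h)
      have hcp : (a * b) ^ p = b ^ p := by
        rw [mul_pow, ← hao, pow_orderOf_eq_one, one_mul]
      have hbpc : b ^ p ∈ Hc := hcp ▸ Hc.pow_mem hcH p
      exact hcB (hdis (b ^ p) hbp Hc hHc hbpc Hb hHb (Hb.pow_mem hbH p))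
    have hdvd : orderOf b ∣ p := orderOf_dvd_of_pow_eq_one hbp
    rcases hp.eq_one_or_self_of_dvd _ hdvd with h | h
    · exact absurd (orderOf_eq_one_iff.mp h) hb
    · exact h
  -- G is nontrivial: some member is a nontrivial subgroup
  obtain ⟨H0, hH0, _⟩ := Set.exists_ne_of_one_lt_ncard (s := P) (by omega) (⊥ : Subgroup G)
  obtain ⟨⟨x0, hx0H⟩, hx0⟩ := Subgroup.ne_bot_iff_exists_ne_one.mp (hbot H0 hH0)
  have hx0' : x0 ≠ 1 := by simpa [Subtype.ext_iff] using hx0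
  have hG1 : 1 < Fintype.card G := Fintype.one_lt_card_iff_nontrivial.mpr ⟨x0, 1, hx0'⟩
  -- get an element of prime order p
  set p := (Fintype.card G).minFac with hpdef
  have hp : p.Prime := Nat.minFac_prime (by omega)
  have : Fact p.Prime := ⟨hp⟩
  obtain ⟨a, ha⟩ := exists_prime_orderOf_dvd_card p (Nat.minFac_dvd _)
  have ha1 : a ≠ 1 := by
    intro h; rw [h, orderOf_one] at ha; exact hp.ne_one ha.symm
  obtain ⟨Ha, ⟨hHa, haH⟩, _⟩ := hcov a ha1
  refine ⟨p, hp, fun g hg => ?_⟩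
  obtain ⟨Hg, ⟨hHg, hgH⟩, _⟩ := hcov g hg
  by_cases heq : Ha = Hg
  · -- g lies in the same member as a: go through a third member
    obtain ⟨K, hK, hKne⟩ := Set.exists_ne_of_one_lt_ncard (s := P) (by omega) Ha
    obtain ⟨⟨x, hxK⟩, hx⟩ := Subgroup.ne_bot_iff_exists_ne_one.mp (hbot K hK)
    have hx' : x ≠ 1 := by simpa [Subtype.ext_iff] using hx
    have hxp : orderOf x = p :=
      key p hp a x ha1 hx' Ha hHa haH K hK hxK (Ne.symm hKne) ha
    exact key p hp x g hx' hg K hK hxK Hg hHg hgH (heq ▸ hKne) hxp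
  · exact key p hp a g ha1 hg Ha hHa haH Hg hHg hgH heq ha
end

section
/- Let W = GF(2^5) as a vector space over GF(2) and let U be a 3-dimensional GF(2)-subspace of W. Then the Bu construction yields a vector space partition of V(8,2) = W × U of type [3^{32} 5^1]: thirty-two 3-dimensional subspaces U_α = {(αu,u) : u ∈ U} for α ∈ GF(32), together with the 5-dimensional subspace W × {0}. -/
/-!
For `(x, u) ∈ K × U` with `u ≠ 0` the only subspace `{(α w, w) : w ∈ U}` containing it is the one
with `α = x / u`, while the vectors with `u = 0` are exactly those of `K × {0}`; so these subspaces
together with `K × {0}` partition `K × U` as soon as `U ≠ 0`. Dimensions are then counted from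
`|GF(32)| = 2⁵`.
-/

namespace BuConstruction

variable {F K : Type*} [Field F] [Field K] [Algebra F K] (U : Submodule F K)

def buSubspace (α : K) : Submodule F (K × U) :=
  LinearMap.range (((LinearMap.mulLeft F α).comp U.subtype).prod LinearMap.id)

def buPartition : Set (Submodule F (K × U)) :=
  Set.range (buSubspace U) ∪ {LinearMap.range (LinearMap.inl F K U)}

variable {U}

theorem mem_buSubspace_iff {α : K} {v : K × U} : v ∈ buSubspace U α ↔ v.1 = α * v.2 := by
  constructor
  · rintro ⟨w, rfl⟩
    rfl
  · intro h
    exact ⟨v.2, Prod.ext h.symm rfl⟩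

theorem mem_range_inl_iff {v : K × U} : v ∈ LinearMap.range (LinearMap.inl F K U) ↔ v.2 = 0 := by
  rw [LinearMap.range_inl, LinearMap.mem_ker, LinearMap.snd_apply]

theorem mem_buSubspace_iff_eq_div {α : K} {v : K × U} (hv : v.2 ≠ 0) :
    v ∈ buSubspace U α ↔ α = v.1 / v.2 := by
  have hv' : (v.2 : K) ≠ 0 := by simpa using hv
  rw [mem_buSubspace_iff, eq_div_iff hv', eq_comm]

theorem eq_zero_of_mem_buSubspace {α : K} {v : K × U} (hv : v ∈ buSubspace U α) (h2 : v.2 = 0) :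
    v = 0 := by
  rw [mem_buSubspace_iff, h2] at hv
  exact Prod.ext (by simpa using hv) h2

theorem exists_mem_buSubspace_snd_ne_zero (hU : U ≠ ⊥) (α : K) :
    ∃ v ∈ buSubspace U α, v.2 ≠ 0 := by
  obtain ⟨u, hu, hu0⟩ := Submodule.exists_mem_ne_zero_of_ne_bot hU
  exact ⟨(α * u, ⟨u, hu⟩), mem_buSubspace_iff.2 rfl, by simpa using hu0⟩

theorem buSubspace_ne_bot (hU : U ≠ ⊥) (α : K) : buSubspace U α ≠ ⊥ := by
  obtain ⟨v, hv, hv2⟩ := exists_mem_buSubspace_snd_ne_zero hU α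
  rintro hbot
  rw [hbot, Submodule.mem_bot] at hv
  exact hv2 (by rw [hv]; rfl)

theorem range_inl_ne_bot : LinearMap.range (LinearMap.inl F K U) ≠ ⊥ := by
  rw [Ne, LinearMap.range_eq_bot]
  intro h
  simpa using LinearMap.congr_fun h 1

theorem range_inl_notMem_range_buSubspace (hU : U ≠ ⊥) :
    LinearMap.range (LinearMap.inl F K U) ∉ Set.range (buSubspace U) := by
  rintro ⟨α, hα⟩
  obtain ⟨v, hv, hv2⟩ := exists_mem_buSubspace_snd_ne_zero hU α
  rw [hα, mem_range_inl_iff] at hv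
  exact hv2 hv

theorem buSubspace_injective (hU : U ≠ ⊥) : Function.Injective (buSubspace U) := by
  intro α β hαβ
  obtain ⟨v, hv, hv2⟩ := exists_mem_buSubspace_snd_ne_zero hU α
  have hvβ : v ∈ buSubspace U β := hαβ ▸ hv
  rw [mem_buSubspace_iff_eq_div hv2] at hv hvβ
  rw [hv, hvβ]

theorem isVSPartition_buPartition (hU : U ≠ ⊥) : IsVSPartition (buPartition U) := by
  refine ⟨?_, fun v hv => ?_⟩
  · rintro (⟨α, hα⟩ | hinl)
    · exact buSubspace_ne_bot hU α hα
    · exact range_inl_ne_bot (Set.mem_singleton_iff.1 hinl).symm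
  by_cases h2 : v.2 = 0
  · refine ⟨_, ⟨Or.inr rfl, mem_range_inl_iff.2 h2⟩, ?_⟩
    rintro S ⟨⟨α, rfl⟩ | hS, hvS⟩
    · exact absurd (eq_zero_of_mem_buSubspace hvS h2) hv
    · exact hS
  · refine ⟨buSubspace U (v.1 / v.2), ⟨Or.inl ⟨_, rfl⟩, (mem_buSubspace_iff_eq_div h2).2 rfl⟩, ?_⟩
    rintro S ⟨⟨β, rfl⟩ | hS, hvS⟩
    · rw [(mem_buSubspace_iff_eq_div h2).1 hvS]
    · rw [Set.mem_singleton_iff.1 hS, mem_range_inl_iff] at hvS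
      exact absurd hvS h2

theorem finrank_buSubspace (α : K) : Module.finrank F (buSubspace U α) = Module.finrank F U :=
  LinearMap.finrank_range_of_inj fun _ _ h => congrArg Prod.snd h

end BuConstruction

open BuConstruction in
/-- The Bu construction with W = GF(32) and U a 3-dimensional GF(2)-subspace of W
yields a vector space partition of V(8,2) = W × U of type [3^32 5^1]: the thirty-two
subspaces U_α = {(αu, u) : u ∈ U}, α ∈ GF(32), of dimension 3, together with the
5-dimensional subspace W × {0}. -/
theorem bu_construction_V82
    (K : Type*) [Field K] [Fintype K] [Algebra (ZMod 2) K]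
    (hK : Fintype.card K = 32)
    (U : Submodule (ZMod 2) K) (hU : Module.finrank (ZMod 2) U = 3)
    (Ua : K → Submodule (ZMod 2) (K × ↥U))
    (hUa : ∀ α : K, Ua α =
      LinearMap.range (((LinearMap.mulLeft (ZMod 2) α).comp U.subtype).prod LinearMap.id))
    (W₀ : Submodule (ZMod 2) (K × ↥U))
    (hW₀ : W₀ = LinearMap.range (LinearMap.inl (ZMod 2) K ↥U)) :
    Module.finrank (ZMod 2) (K × ↥U) = 8 ∧
      IsVSPartition (Set.range Ua ∪ {W₀}) ∧
      Function.Injective Ua ∧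
      (∀ α : K, Module.finrank (ZMod 2) ↥(Ua α) = 3) ∧
      Module.finrank (ZMod 2) ↥W₀ = 5 ∧
      W₀ ∉ Set.range Ua := by
  obtain rfl : Ua = buSubspace U := funext hUa
  subst hW₀
  have hK5 : Module.finrank (ZMod 2) K = 5 := by
    have hcard := Module.card_eq_pow_finrank (K := ZMod 2) (V := K)
    rw [hK, ZMod.card] at hcard
    exact Nat.pow_right_injective le_rfl (hcard.symm.trans (by norm_num : 32 = 2 ^ 5))
  have hU0 : U ≠ ⊥ := by
    rintro rfl
    simp at hU
  refine ⟨by rw [Module.finrank_prod, hK5, hU], isVSPartition_buPartition hU0,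
    buSubspace_injective hU0, fun α => (finrank_buSubspace α).trans hU, ?_,
    range_inl_notMem_range_buSubspace hU0⟩
  rw [LinearMap.finrank_range_of_inj LinearMap.inl_injective, hK5]
end
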